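/- For every real α > 0, the equation 2r + ∑_{n=2}^∞ 4 r^n/(α n² + (1−α) n) = 1 + ∑_{n=2}^∞ 2(−1)^{n−1}/(α n² + (1−α) n) has a unique solution r in the open interval (0,1). -/

import Mathlib

/-!
Write `F r = 2 r + ∑ 4 rⁿ / (α n² + (1 - α) n)`. The denominators grow quadratically, so the
series converges uniformly on `[-1, 1]` and `F` is continuous there; on `[0, 1]` it is strictly
increasing, because `2 r` is and every term of the series is monotone. Since `F 0 = 0` and `F 1`
is `2` plus a positive series, the intermediate value theorem gives a unique root once the
alternating right-hand side is shown to lie strictly between `0` and `F 1`. The Leibniz bound for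
the alternating series, with denominators increasing in `n`, gives
`1 + ∑ ⋯ ≥ 1 - 1 / (α + 1) > 0`.
-/

open Set

theorem existsUnique_mem_Ioo_eq_of_strictMonoOn
    {α δ : Type*} [ConditionallyCompleteLinearOrder α] [TopologicalSpace α] [OrderTopology α]
    [DenselyOrdered α] [LinearOrder δ] [TopologicalSpace δ] [OrderClosedTopology δ]
    {f : α → δ} {a b : α} {y : δ} (hab : a ≤ b) (hf : ContinuousOn f (Icc a b))
    (hmono : StrictMonoOn f (Icc a b)) (hy : y ∈ Ioo (f a) (f b)) :
    ∃! x, x ∈ Ioo a b ∧ f x = y := by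
  obtain ⟨x, hx, rfl⟩ := intermediate_value_Ioo hab hf hy
  exact ⟨x, ⟨hx, rfl⟩, fun x' ⟨hx', hfx'⟩ =>
    hmono.injOn (Ioo_subset_Icc_self hx') (Ioo_subset_Icc_self hx) hfx'⟩

theorem Antitone.tsum_alternating_le {f : ℕ → ℝ} (hfa : Antitone f) (hfs : Summable f) :
    ∑' n, (-1) ^ n * f n ≤ f 0 := by
  simpa using (le_abs_self _).trans (alternating_series_error_bound f hfa hfs 0)

section SeriesOverDenominators

variable {d : ℕ → ℝ}

theorem summable_div_of_abs_le (hd : ∀ n, 0 ≤ d n) (hs : Summable fun n => (d n)⁻¹)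
    {a : ℕ → ℝ} {C : ℝ} (ha : ∀ n, |a n| ≤ C) : Summable fun n => a n / d n :=
  .of_norm_bounded (hs.mul_left C) fun n => by
    rw [Real.norm_eq_abs, abs_div, abs_of_nonneg (hd n), ← div_eq_mul_inv]
    exact div_le_div_of_nonneg_right (ha n) (hd n)

theorem continuousOn_tsum_pow_div (hd : ∀ n, 0 ≤ d n) (hs : Summable fun n => (d n)⁻¹)
    (c : ℝ) (k : ℕ) : ContinuousOn (fun r => ∑' n, c * r ^ (n + k) / d n) (Icc (-1) 1) := by
  refine continuousOn_tsum (fun n => by fun_prop) (hs.mul_left |c|) fun n r hr => ?_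
  rw [Real.norm_eq_abs, abs_div, abs_of_nonneg (hd n), abs_mul, abs_pow, ← div_eq_mul_inv]
  have hr1 : |r| ^ (n + k) ≤ 1 := pow_le_one₀ (abs_nonneg r) (abs_le.2 hr)
  gcongr
  · exact hd n
  · exact mul_le_of_le_one_right (abs_nonneg c) hr1

theorem monotoneOn_tsum_pow_div (hd : ∀ n, 0 ≤ d n) (hs : Summable fun n => (d n)⁻¹)
    {c : ℝ} (hc : 0 ≤ c) (k : ℕ) :
    MonotoneOn (fun r => ∑' n, c * r ^ (n + k) / d n) (Icc 0 1) := by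
  intro x hx y hy hxy
  have bounded {r : ℝ} (hr : r ∈ Icc (0 : ℝ) 1) (n : ℕ) : |c * r ^ (n + k)| ≤ c := by
    rw [abs_mul, abs_pow, abs_of_nonneg hc, abs_of_nonneg hr.1]
    exact mul_le_of_le_one_right hc (pow_le_one₀ hr.1 hr.2)
  refine Summable.tsum_le_tsum (fun n => ?_) (summable_div_of_abs_le hd hs (bounded hx))
    (summable_div_of_abs_le hd hs (bounded hy))
  exact div_le_div_of_nonneg_right
    (mul_le_mul_of_nonneg_left (pow_le_pow_left₀ hx.1 hxy _) hc) (hd n)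

end SeriesOverDenominators

/-- The denominator `α m² + (1 - α) m` of the statement at `m = n + 2`. -/
abbrev denom (α : ℝ) (n : ℕ) : ℝ := α * ((n : ℝ) + 2) ^ 2 + (1 - α) * ((n : ℝ) + 2)

theorem denom_eq_mul (α : ℝ) (n : ℕ) :
    denom α n = ((n : ℝ) + 2) * (α * ((n : ℝ) + 1) + 1) := by
  ring

theorem denom_pos {α : ℝ} (hα : 0 ≤ α) (n : ℕ) : 0 < denom α n := by
  rw [denom_eq_mul]; positivity

theorem monotone_denom {α : ℝ} (hα : 0 ≤ α) : Monotone (denom α) := by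
  intro m n hmn
  have : (m : ℝ) ≤ n := by exact_mod_cast hmn
  rw [denom_eq_mul, denom_eq_mul]
  gcongr

theorem summable_inv_denom {α : ℝ} (hα : 0 < α) : Summable fun n => (denom α n)⁻¹ := by
  have hsq : Summable fun n : ℕ => (((n : ℝ) + 1) ^ 2)⁻¹ := by
    simpa using (summable_nat_add_iff 1).2 (Real.summable_nat_pow_inv.2 one_lt_two)
  refine .of_nonneg_of_le (fun n => inv_nonneg.2 (denom_pos hα.le n).le) (fun n => ?_)
    (hsq.mul_left α⁻¹)
  rw [← mul_inv]
  refine inv_anti₀ (by positivity) ?_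
  rw [denom_eq_mul]
  nlinarith [(n.cast_nonneg : (0 : ℝ) ≤ n)]

theorem neg_one_lt_tsum_alternating_div_denom {α : ℝ} (hα : 0 < α) :
    -1 < ∑' n : ℕ, 2 * (-1 : ℝ) ^ (n + 1) / denom α n := by
  have hanti : Antitone fun n => (denom α n)⁻¹ := fun m n hmn =>
    inv_anti₀ (denom_pos hα.le m) (monotone_denom hα.le hmn)
  have hle := hanti.tsum_alternating_le (summable_inv_denom hα)
  have hrw : ∑' n : ℕ, 2 * (-1 : ℝ) ^ (n + 1) / denom α n
      = -2 * ∑' n : ℕ, (-1 : ℝ) ^ n * (denom α n)⁻¹ := by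
    rw [← tsum_mul_left]
    congr 1 with n
    ring
  have h0 : (denom α 0)⁻¹ < 1 / 2 := by
    rw [inv_lt_comm₀ (denom_pos hα.le 0) (by norm_num)]
    norm_num [denom]
    linarith
  rw [hrw]
  linarith

theorem stmt11 (α : ℝ) (hα : 0 < α) :
    ∃! r : ℝ, r ∈ Set.Ioo (0 : ℝ) 1 ∧
      2 * r + (∑' n : ℕ, 4 * r ^ (n + 2) / (α * ((n : ℝ) + 2) ^ 2 + (1 - α) * ((n : ℝ) + 2)))
        = 1 + ∑' n : ℕ, 2 * (-1 : ℝ) ^ (n + 1) / (α * ((n : ℝ) + 2) ^ 2 + (1 - α) * ((n : ℝ) + 2)) := by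
  have hd n := (denom_pos hα.le n).le
  have hs := summable_inv_denom hα
  set F : ℝ → ℝ := fun r => 2 * r + ∑' n : ℕ, 4 * r ^ (n + 2) / denom α n
  have hcont : ContinuousOn F (Icc 0 1) :=
    (continuous_const.mul continuous_id).continuousOn.add
      ((continuousOn_tsum_pow_div hd hs 4 2).mono (Icc_subset_Icc (by norm_num) le_rfl))
  have hmono : StrictMonoOn F (Icc 0 1) :=
    ((strictMono_mul_left_of_pos two_pos).strictMonoOn _).add_monotone
      (monotoneOn_tsum_pow_div hd hs (by norm_num) 2)
  have hS := neg_one_lt_tsum_alternating_div_denom hα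
  have hS_le : ∑' n : ℕ, 2 * (-1 : ℝ) ^ (n + 1) / denom α n
      ≤ ∑' n : ℕ, 4 * 1 ^ (n + 2) / denom α n := by
    refine Summable.tsum_le_tsum (fun n => ?_)
      (summable_div_of_abs_le hd hs (C := 2) fun n => by simp)
      (summable_div_of_abs_le hd hs (C := 4) fun n => by simp)
    refine div_le_div_of_nonneg_right ?_ (hd n)
    rcases neg_one_pow_eq_or ℝ (n + 1) with h | h <;> norm_num [h]
  refine existsUnique_mem_Ioo_eq_of_strictMonoOn zero_le_one hcont hmono ⟨?_, ?_⟩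
  · have hF0 : F 0 = 0 := by simp [F]
    change F 0 < 1 + ∑' n : ℕ, 2 * (-1 : ℝ) ^ (n + 1) / denom α n
    linarith
  · change _ < 2 * 1 + ∑' n : ℕ, 4 * 1 ^ (n + 2) / denom α n
    linarith
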